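/- For every cluster C of the cumulatively merged partition 𝒞(G,r,α): (i) the set B(C, r(C)^α) induces a connected subgraph of G; (ii) diam(C) ≤ max(r(C)·log₂ r(C)/2, 0) if α = 1, and diam(C) ≤ r(C)^α/(2^α − 2) if α > 1. -/

import Mathlib

open scoped ENNReal NNReal
open MeasureTheory

namespace CMPPaper

variable {V : Type*}

/-- Graph distance between two subsets of vertices, valued in `ℝ≥0∞`
(`⊤` when one of the sets is empty). -/
noncomputable def setDist (G : SimpleGraph V) (A B : Set V) : ℝ≥0∞ :=
  ⨅ (x : A) (y : B), (G.dist x.1 y.1 : ℝ≥0∞)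

/-- Total weight `r(A) = Σ_{x ∈ A} r(x) ∈ [0,∞]` of a set of vertices. -/
noncomputable def wt (r : V → ℝ≥0) (A : Set V) : ℝ≥0∞ :=
  ∑' x : A, (r x.1 : ℝ≥0∞)

/-- A partition (encoded as a setoid) of the vertex set is `(r,α)`-admissible if any two
distinct clusters `C ≠ C'` satisfy `d(C,C') > min(r(C), r(C'))^α`. -/
def Admissible (G : SimpleGraph V) (r : V → ℝ≥0) (α : ℝ) (s : Setoid V) : Prop :=
  ∀ C ∈ s.classes, ∀ C' ∈ s.classes, C ≠ C' →
    (min (wt r C) (wt r C')) ^ α < setDist G C C'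

/-- The cumulatively merged partition: the finest `(r,α)`-admissible partition, i.e. the
intersection (infimum as setoids) of all `(r,α)`-admissible partitions. -/
noncomputable def CMP (G : SimpleGraph V) (r : V → ℝ≥0) (α : ℝ) : Setoid V :=
  sInf {s : Setoid V | Admissible G r α s}

/-- The cluster of the CMP containing `x`. -/
def cluster (G : SimpleGraph V) (r : V → ℝ≥0) (α : ℝ) (x : V) : Set V :=
  {y | (CMP G r α) x y}

/-- The ball `B(A, l) = {z : d(z,A) ≤ l}` around a set of vertices. -/
def ballSet (G : SimpleGraph V) (A : Set V) (l : ℝ≥0∞) : Set V :=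
  {z | ∃ a ∈ A, (G.dist z a : ℝ≥0∞) ≤ l}

/-- A subset `H` of the vertices is stable if every cluster `C` of the CMP of the induced
subgraph on `H` (with the restricted weights) satisfies `B(C, r(C)^α) ⊆ H`. -/
def IsStable (G : SimpleGraph V) (r : V → ℝ≥0) (α : ℝ) (H : Set V) : Prop :=
  ∀ C ∈ (CMP (G.induce H) (fun x : H => r x) α).classes,
    ballSet G (Subtype.val '' C) ((wt (fun x : H => r x) C) ^ α) ⊆ H

/-- The stabiliser of `W`: the smallest stable set containing `W`, i.e. the intersection of
all stable sets containing `W`. -/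
def stabiliser (G : SimpleGraph V) (r : V → ℝ≥0) (α : ℝ) (W : Set V) : Set V :=
  ⋂₀ {H : Set V | IsStable G r α H ∧ W ⊆ H}

open Classical in
/-- The merging operator `M_{x,y}`: if the clusters of `x` and `y` are distinct and
`d(x,y) ≤ min(r(𝒞_x), r(𝒞_y))^α`, merge them (take the smallest coarsening of `s`
relating `x` and `y`); otherwise leave the partition unchanged. -/
noncomputable def mergeOp (G : SimpleGraph V) (r : V → ℝ≥0) (α : ℝ) (x y : V)
    (s : Setoid V) : Setoid V :=
  if ¬ s x y ∧ (G.dist x y : ℝ≥0∞) ≤ (min (wt r {u | s x u}) (wt r {u | s y u})) ^ α then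
    sInf {t : Setoid V | s ≤ t ∧ t x y}
  else s

/-- The relation `C ↦ C'` (`C'` descends from `C`) on clusters of the CMP. -/
def Descends (G : SimpleGraph V) (r : V → ℝ≥0) (α : ℝ) (C C' : Set V) : Prop :=
  C ∈ (CMP G r α).classes ∧ C' ∈ (CMP G r α).classes ∧ C ≠ C' ∧
    setDist G C C' ≤ (wt r C) ^ α

/-- Integer part of an extended nonnegative real, valued in `ℕ∞`. -/
noncomputable def efloor (x : ℝ≥0∞) : ℕ∞ :=
  if x = ⊤ then ⊤ else (⌊x.toReal⌋₊ : ℕ∞)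

/-- The bound `max(w log₂ w / 2, 0)` (for `α = 1`), resp. `w^α/(2^α-2)` (for `α ≠ 1`),
on the diameter of a cluster of total weight `w`. -/
noncomputable def diamBound (α : ℝ) (w : ℝ≥0∞) : ℝ≥0∞ :=
  if α = 1 then
    (if w = ⊤ then ⊤ else ENNReal.ofReal (max (w.toReal * Real.logb 2 w.toReal / 2) 0))
  else w ^ α / ((2 : ℝ≥0∞) ^ α - 2)

/-- The relation `C →η C'` on clusters of the CMP:  `d(C,C') ≤ η·r(C)^α`. -/
def EtaDesc (G : SimpleGraph V) (r : V → ℝ≥0) (α η : ℝ) (C C' : Set V) : Prop :=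
  C ∈ (CMP G r α).classes ∧ C' ∈ (CMP G r α).classes ∧ C ≠ C' ∧
    setDist G C C' ≤ ENNReal.ofReal η * (wt r C) ^ α

/-- The `η`-stabiliser of a vertex `x`: the union of `𝒞_x` together with all clusters
reachable from `𝒞_x` by a finite oriented path for the relation `→η`. -/
def etaStab (G : SimpleGraph V) (r : V → ℝ≥0) (α η : ℝ) (x : V) : Set V :=
  ⋃₀ {C' | Relation.ReflTransGen (EtaDesc G r α η) (cluster G r α x) C'}

/-- The path graph on `ℕ`: `m` and `m+1` are adjacent. -/
def pathGraphN : SimpleGraph ℕ := SimpleGraph.fromRel (fun m n => n = m + 1)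

/-- The two-sided path graph on `ℤ`: `k` and `k+1` are adjacent. -/
def pathGraphZ : SimpleGraph ℤ := SimpleGraph.fromRel (fun a b => b = a + 1)

/-- The hypercubic lattice `ℤ^d`: `x` and `y` are adjacent iff `‖x-y‖₁ = 1`. -/
def latticeGraph (d : ℕ) : SimpleGraph (Fin d → ℤ) :=
  SimpleGraph.fromRel (fun x y => (∑ i, |x i - y i|) = 1)

/-- The CMP of the weighted graph `(G, r)` with expansion exponent `α` has an
infinite cluster. -/
def HasInfiniteCluster (G : SimpleGraph V) (r : V → ℝ≥0) (α : ℝ) : Prop :=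
  ∃ C ∈ (CMP G r α).classes, C.Infinite

/-- `w` is an i.i.d. family of Bernoulli(`p`) weights indexed by `V`, under the
probability measure `μ`. -/
def IsBernoulliField {Ω : Type*} [MeasurableSpace Ω] (μ : Measure Ω)
    (p : ℝ) (w : Ω → V → ℝ≥0) : Prop :=
  (∀ x : V, Measurable fun ω => w ω x) ∧
  (∀ ω x, w ω x = 0 ∨ w ω x = 1) ∧
  (∀ x : V, μ {ω | w ω x = 1} = ENNReal.ofReal p) ∧
  ProbabilityTheory.iIndepFun (fun x ω => w ω x) μ

/-- `w` is an i.i.d. family of weights indexed by `V`, each with law `ν`, under the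
probability measure `μ`. -/
def IsIIDField {Ω : Type*} [MeasurableSpace Ω] (μ : Measure Ω)
    (ν : Measure ℝ≥0) (w : Ω → V → ℝ≥0) : Prop :=
  (∀ x : V, Measurable fun ω => w ω x) ∧
  (∀ x : V, μ.map (fun ω => w ω x) = ν) ∧
  ProbabilityTheory.iIndepFun (fun x ω => w ω x) μ

/-!
A cluster `C` of finite weight is finite: otherwise one could split off a finite part `F` with
`r(C \ F) < 1`, and since distinct vertices are at distance at least `1`, splitting `C` into `F`
and `C \ F` would give a finer admissible partition. A finite cluster is then assembled from
singletons by merging disjoint pieces `A`, `B` with `d(A, B) ≤ min(r(A), r(B))^α`: in any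
partition of `C` into such pieces, the lightest piece `A` is within `r(A)^α` of `C \ A`, for the
same reason. Both claims are proved along this merge tree. A geodesic between two merged pieces
stays in the ball of the union, and the merged pieces have weight at least `1`, where the bound
`D = diamBound α` satisfies `D(a) + min(a, b)^α + D(b) ≤ D(a + b)`: by convexity of `t ↦ t^α`
for `α > 1`, and by `log₂ (1 + t) ≥ t` on `[0, 1]` for `α = 1`.
-/

variable {G : SimpleGraph V} {r : V → ℝ≥0} {α : ℝ} {A B C S : Set V}

theorem setDist_le_dist {a b : V} (ha : a ∈ A) (hb : b ∈ B) :
    setDist G A B ≤ G.dist a b :=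
  (iInf_le _ (⟨a, ha⟩ : A)).trans (iInf_le (fun y : B => (G.dist a y.1 : ℝ≥0∞)) ⟨b, hb⟩)

theorem setDist_anti {A' B' : Set V} (hA : A' ⊆ A) (hB : B' ⊆ B) :
    setDist G A B ≤ setDist G A' B' :=
  le_iInf₂ fun x y => setDist_le_dist (hA x.2) (hB y.2)

theorem setDist_comm (A B : Set V) : setDist G A B = setDist G B A := by
  rw [setDist, setDist, iInf_comm]
  simp only [SimpleGraph.dist_comm]

theorem exists_dist_eq_setDist (hA : A.Nonempty) (hB : B.Nonempty) :
    ∃ a ∈ A, ∃ b ∈ B, (G.dist a b : ℝ≥0∞) = setDist G A B := by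
  let D : Set ℕ := {n | ∃ a ∈ A, ∃ b ∈ B, G.dist a b = n}
  have hD : D.Nonempty := ⟨_, hA.some, hA.some_mem, hB.some, hB.some_mem, rfl⟩
  obtain ⟨a, ha, b, hb, hab⟩ := Nat.sInf_mem hD
  refine ⟨a, ha, b, hb, le_antisymm ?_ (setDist_le_dist ha hb)⟩
  refine le_iInf₂ fun x y => ?_
  rw [hab]
  exact_mod_cast Nat.sInf_le (show G.dist x y ∈ D from ⟨x.1, x.2, y.1, y.2, rfl⟩)

theorem one_le_setDist (hconn : G.Connected) (h : Disjoint A B) : 1 ≤ setDist G A B :=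
  le_iInf₂ fun x y => by
    exact_mod_cast hconn.pos_dist_of_ne fun hxy => h.ne_of_mem x.2 y.2 hxy

theorem wt_eq_tsum_indicator (A : Set V) :
    wt r A = ∑' x, A.indicator (fun x => (r x : ℝ≥0∞)) x :=
  tsum_subtype A (fun x => (r x : ℝ≥0∞))

theorem wt_mono (h : A ⊆ B) : wt r A ≤ wt r B := by
  simp only [wt_eq_tsum_indicator]
  exact ENNReal.tsum_le_tsum (Set.indicator_le_indicator_of_subset h fun _ => zero_le)

theorem wt_union (h : Disjoint A B) : wt r (A ∪ B) = wt r A + wt r B :=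
  ENNReal.summable.tsum_union_disjoint (f := fun x => (r x : ℝ≥0∞)) h ENNReal.summable

theorem wt_ne_top_of_finite (h : A.Finite) : wt r A ≠ ⊤ := by
  have := h.fintype
  simp [wt, tsum_fintype]

theorem exists_finset_wt_diff_lt (hA : wt r A ≠ ⊤) {ε : ℝ≥0∞} (hε : 0 < ε) (t : Finset V) :
    ∃ s : Finset V, t ⊆ s ∧ wt r (A \ s) < ε := by
  classical
  rw [wt_eq_tsum_indicator] at hA
  obtain ⟨s₀, hs₀⟩ := Filter.eventually_atTop.1
    ((ENNReal.tendsto_tsum_compl_atTop_zero hA).eventually (gt_mem_nhds hε))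
  refine ⟨t ∪ s₀, Finset.subset_union_left, ?_⟩
  convert hs₀ (t ∪ s₀) Finset.subset_union_right using 1
  rw [wt_eq_tsum_indicator, Set.sdiff_eq, Set.inter_comm, ← Set.indicator_indicator]
  exact (tsum_subtype {x | x ∉ t ∪ s₀} (A.indicator _)).symm

theorem subset_ballSet (R : ℝ≥0∞) : A ⊆ ballSet G A R :=
  fun a ha => ⟨a, ha, by simp⟩

theorem ballSet_mono {A' : Set V} {R R' : ℝ≥0∞} (hA : A ⊆ A') (hR : R ≤ R') :
    ballSet G A R ⊆ ballSet G A' R' :=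
  fun _ ⟨a, ha, hz⟩ => ⟨a, hA ha, hz.trans hR⟩

theorem exists_walk_support_subset_ballSet (hconn : G.Preconnected) {a z : V} {R : ℝ≥0∞}
    (ha : a ∈ A) (hz : (G.dist a z : ℝ≥0∞) ≤ R) :
    ∃ p : G.Walk a z, ∀ x ∈ p.support, x ∈ ballSet G A R := by
  classical
  obtain ⟨p, hp⟩ := (hconn a z).exists_walk_length_eq_dist
  refine ⟨p, fun x hx => ⟨a, ha, le_trans ?_ hz⟩⟩
  rw [SimpleGraph.dist_comm, ← hp]
  exact_mod_cast (SimpleGraph.dist_le _).trans (p.length_takeUntil_le_length hx)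

def LinkedWithin (G : SimpleGraph V) (s S : Set V) : Prop :=
  ∀ x ∈ S, ∀ y ∈ S, ∃ p : G.Walk x y, ∀ z ∈ p.support, z ∈ s

theorem LinkedWithin.mono {s t : Set V} (h : LinkedWithin G s S) (hst : s ⊆ t) :
    LinkedWithin G t S :=
  fun x hx y hy => (h x hx y hy).imp fun _ hp z hz => hst (hp z hz)

theorem LinkedWithin.union {s : Set V} (hA : LinkedWithin G s A) (hB : LinkedWithin G s B)
    {a b : V} (ha : a ∈ A) (hb : b ∈ B) (p : G.Walk a b) (hp : ∀ z ∈ p.support, z ∈ s) :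
    LinkedWithin G s (A ∪ B) := by
  have cross : ∀ x ∈ A, ∀ y ∈ B, ∃ q : G.Walk x y, ∀ z ∈ q.support, z ∈ s := by
    intro x hx y hy
    obtain ⟨q₁, hq₁⟩ := hA x hx a ha
    obtain ⟨q₂, hq₂⟩ := hB b hb y hy
    refine ⟨(q₁.append p).append q₂, fun z hz => ?_⟩
    simp only [SimpleGraph.Walk.mem_support_append_iff] at hz
    rcases hz with (hz | hz) | hz
    exacts [hq₁ z hz, hp z hz, hq₂ z hz]
  rintro x (hx | hx) y (hy | hy)
  · exact hA x hx y hy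
  · exact cross x hx y hy
  · obtain ⟨q, hq⟩ := cross y hy x hx
    exact ⟨q.reverse, fun z hz => hq z (by simpa using hz)⟩
  · exact hB x hx y hy

theorem linkedWithin_ballSet_top (hconn : G.Preconnected) : LinkedWithin G (ballSet G S ⊤) S :=
  fun x hx y _ => ⟨(hconn x y).some, fun _ _ => ⟨x, hx, le_top⟩⟩

theorem induce_ballSet_connected (hconn : G.Preconnected) {R : ℝ≥0∞} (hS : S.Nonempty)
    (h : LinkedWithin G (ballSet G S R) S) : (G.induce (ballSet G S R)).Connected := by
  obtain ⟨c, hc⟩ := hS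
  refine G.induce_connected_of_patches c (subset_ballSet R hc) fun {z} hz => ?_
  obtain ⟨a, ha, hza⟩ := hz
  obtain ⟨p, hp⟩ := h c hc a ha
  obtain ⟨q, hq⟩ := exists_walk_support_subset_ballSet hconn ha
    (by rwa [SimpleGraph.dist_comm] : (G.dist a z : ℝ≥0∞) ≤ R)
  refine ⟨{x | x ∈ (p.append q).support}, fun x hx => ?_, (p.append q).start_mem_support,
    (p.append q).end_mem_support, (p.append q).connected_induce_support.preconnected _ _⟩
  rcases (SimpleGraph.Walk.mem_support_append_iff _ _).1 hx with hx | hx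
  exacts [hp x hx, hq x hx]

theorem dist_le_of_mem_union (hconn : G.Connected) {dA dB L : ℝ≥0∞}
    (hA : ∀ x ∈ A, ∀ y ∈ A, (G.dist x y : ℝ≥0∞) ≤ dA)
    (hB : ∀ x ∈ B, ∀ y ∈ B, (G.dist x y : ℝ≥0∞) ≤ dB)
    {a b : V} (ha : a ∈ A) (hb : b ∈ B) (hab : (G.dist a b : ℝ≥0∞) ≤ L) :
    ∀ x ∈ A ∪ B, ∀ y ∈ A ∪ B, (G.dist x y : ℝ≥0∞) ≤ dA + L + dB := by
  have cross : ∀ x ∈ A, ∀ y ∈ B, (G.dist x y : ℝ≥0∞) ≤ dA + L + dB := fun x hx y hy =>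
    calc (G.dist x y : ℝ≥0∞) ≤ G.dist x a + G.dist a b + G.dist b y := by
          exact_mod_cast hconn.dist_triangle.trans (Nat.add_le_add_right hconn.dist_triangle _)
      _ ≤ dA + L + dB := by gcongr; exacts [hA x hx a ha, hB b hb y hy]
  rintro x (hx | hx) y (hy | hy)
  · exact (hA x hx y hy).trans (le_self_add.trans le_self_add)
  · exact cross x hx y hy
  · exact SimpleGraph.dist_comm (G := G) ▸ cross y hy x hx
  · exact (hB x hx y hy).trans le_add_self

def Separated (G : SimpleGraph V) (r : V → ℝ≥0) (α : ℝ) (A B : Set V) : Prop :=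
  min (wt r A) (wt r B) ^ α < setDist G A B

theorem Separated.symm (h : Separated G r α A B) : Separated G r α B A := by
  rwa [Separated, min_comm, setDist_comm]

theorem Separated.mono (hα : 0 ≤ α) {A' B' : Set V} (h : Separated G r α A B)
    (hA : A' ⊆ A) (hB : B' ⊆ B) : Separated G r α A' B' :=
  calc min (wt r A') (wt r B') ^ α
      ≤ min (wt r A) (wt r B) ^ α :=
        ENNReal.rpow_le_rpow (min_le_min (wt_mono hA) (wt_mono hB)) hα
    _ < setDist G A B := h
    _ ≤ setDist G A' B' := setDist_anti hA hB

theorem admissible_iff {s : Setoid V} :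
    Admissible G r α s ↔ ∀ u v, ¬ s u v → Separated G r α {x | s x u} {x | s x v} := by
  refine ⟨fun h u v huv => h _ (s.mem_classes u) _ (s.mem_classes v) fun heq => ?_, ?_⟩
  · exact huv (heq ▸ s.refl u : u ∈ {x | s x v})
  · rintro h _ ⟨u, rfl⟩ _ ⟨v, rfl⟩ hne
    exact h u v fun huv => hne (Set.ext fun x => ⟨fun hx => s.trans hx huv,
      fun hx => s.trans hx (s.symm huv)⟩)

theorem CMP_le {s : Setoid V} (h : Admissible G r α s) : CMP G r α ≤ s :=
  sInf_le h

theorem admissible_CMP (hα : 0 ≤ α) : Admissible G r α (CMP G r α) := by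
  refine admissible_iff.2 fun u v huv => ?_
  have : ¬ ∀ t ∈ {s : Setoid V | Admissible G r α s}, t u v := huv
  push Not at this
  obtain ⟨t, ht, htuv⟩ := this
  exact (admissible_iff.1 ht u v htuv).mono hα (fun x hx => CMP_le ht hx)
    (fun x hx => CMP_le ht hx)

/-- Otherwise splitting the cluster `C` into `A` and `C \ A` would give an admissible partition
strictly finer than the CMP. -/
theorem setDist_diff_le (hα : 0 ≤ α) (hC : C ∈ (CMP G r α).classes) (hA : A.Nonempty)
    (hAC : A ⊆ C) (hCA : (C \ A).Nonempty) :
    setDist G A (C \ A) ≤ min (wt r A) (wt r (C \ A)) ^ α := by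
  by_contra hle
  have hsep : Separated G r α A (C \ A) := not_le.1 hle
  obtain ⟨c, rfl⟩ := hC
  obtain ⟨t, ht⟩ : ∃ t : Setoid V, ∀ u v, t u v ↔ CMP G r α u v ∧ (u ∈ A ↔ v ∈ A) :=
    ⟨CMP G r α ⊓ Setoid.ker (· ∈ A), fun u v => by
      rw [Setoid.inf_iff_and, Setoid.ker_def, eq_iff_iff]⟩
  have hcross : ∀ u v, u ∈ A → v ∉ A → CMP G r α u v →
      Separated G r α {x | t x u} {x | t x v} := by
    intro u v hu hv huv
    refine hsep.mono hα (fun x hx => ((ht x u).1 hx).2.2 hu) fun x hx => ?_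
    have hx := (ht x v).1 hx
    exact ⟨(CMP G r α).trans hx.1 ((CMP G r α).trans ((CMP G r α).symm huv) (hAC hu)),
      fun hxA => hv (hx.2.1 hxA)⟩
  have hadm : Admissible G r α t := by
    refine admissible_iff.2 fun u v htuv => ?_
    by_cases huv : CMP G r α u v
    · have hA' : ¬ (u ∈ A ↔ v ∈ A) := fun h => htuv ((ht u v).2 ⟨huv, h⟩)
      by_cases hu : u ∈ A
      · exact hcross u v hu (fun hv => hA' (iff_of_true hu hv)) huv
      · exact (hcross v u (by tauto) hu ((CMP G r α).symm huv)).symm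
    · exact (admissible_iff.1 (admissible_CMP hα) u v huv).mono hα
        (fun x hx => ((ht x u).1 hx).1) fun x hx => ((ht x v).1 hx).1
  obtain ⟨a, ha⟩ := hA
  obtain ⟨b, hbC, hbA⟩ := hCA
  have hab : CMP G r α a b := (CMP G r α).trans (hAC ha) ((CMP G r α).symm hbC)
  exact hbA (((ht a b).1 (CMP_le hadm hab)).2.1 ha)

theorem one_le_min_wt (hconn : G.Connected) (hα : 0 < α) (hAB : Disjoint A B)
    (h : setDist G A B ≤ min (wt r A) (wt r B) ^ α) : 1 ≤ min (wt r A) (wt r B) :=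
  (ENNReal.rpow_le_rpow_iff hα).1 <| by
    rw [ENNReal.one_rpow]
    exact (one_le_setDist hconn hAB).trans h

theorem finite_of_mem_classes (hconn : G.Connected) (hα : 0 < α)
    (hC : C ∈ (CMP G r α).classes) (hw : wt r C ≠ ⊤) : C.Finite := by
  by_contra hinf
  obtain ⟨c, hc⟩ := (Set.not_finite.1 hinf).nonempty
  obtain ⟨s, hcs, hs⟩ := exists_finset_wt_diff_lt hw one_pos {c}
  have hF : (C ∩ s).Nonempty := ⟨c, hc, hcs (Finset.mem_singleton_self c)⟩
  have hCF : C \ (C ∩ s) = C \ s := Set.sdiff_self_inter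
  have hsplit := setDist_diff_le hα.le hC hF Set.inter_subset_left
    (hCF ▸ ((Set.not_finite.1 hinf).sdiff s.finite_toSet).nonempty)
  have hone := (one_le_min_wt hconn hα Set.disjoint_sdiff_right hsplit).trans (min_le_right _ _)
  exact not_lt.2 (hCF ▸ hone) hs

theorem _root_.ConvexOn.map_add_sub_map_le {s : Set ℝ} {f : ℝ → ℝ} (hf : ConvexOn ℝ s f)
    {x y d : ℝ} (hx : x ∈ s) (hyd : y + d ∈ s) (hxy : x ≤ y) (hd : 0 ≤ d) :
    f (x + d) - f x ≤ f (y + d) - f y := by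
  rcases (add_nonneg (sub_nonneg.2 hxy) hd).eq_or_lt with hc | hc
  · obtain rfl : y = x := by linarith
    obtain rfl : d = 0 := by linarith
    rfl
  -- `x + d` and `y` are the convex combinations of `x` and `y + d` with swapped weights.
  have hp : 0 ≤ (y - x) / (y - x + d) := div_nonneg (sub_nonneg.2 hxy) hc.le
  have hq : 0 ≤ d / (y - x + d) := div_nonneg hd hc.le
  have hw : (y - x) / (y - x + d) + d / (y - x + d) = 1 := by field_simp
  have h₁ := hf.2 hx hyd hp hq hw
  have h₂ := hf.2 hx hyd hq hp (by rwa [add_comm])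
  simp only [smul_eq_mul] at h₁ h₂
  have e₁ : (y - x) / (y - x + d) * x + d / (y - x + d) * (y + d) = x + d := by
    field_simp; ring
  have e₂ : d / (y - x + d) * x + (y - x) / (y - x + d) * (y + d) = y := by
    field_simp; ring
  rw [e₁] at h₁
  rw [e₂] at h₂
  linear_combination h₁ + h₂ + (f x + f (y + d)) * hw

theorem two_rpow_sub_one_mul_rpow_add_rpow_le {x y : ℝ} (hα : 1 ≤ α) (hx : 0 ≤ x)
    (hxy : x ≤ y) : (2 ^ α - 1) * x ^ α + y ^ α ≤ (x + y) ^ α := by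
  have := (convexOn_rpow hα).map_add_sub_map_le hx (Set.mem_Ici.2 (by linarith)) hxy hx
  rw [← two_mul, Real.mul_rpow zero_le_two hx, add_comm y] at this
  linarith

theorem mul_logb_add_mul_logb_add_le {a b : ℝ} (ha : 0 < a) (hab : a ≤ b) :
    a * Real.logb 2 a + b * Real.logb 2 b + 2 * a ≤ (a + b) * Real.logb 2 (a + b) := by
  have hb : 0 < b := ha.trans_le hab
  have hA : 1 ≤ Real.logb 2 ((a + b) / a) := by
    rw [Real.le_logb_iff_rpow_le one_lt_two (by positivity), Real.rpow_one, le_div_iff₀ ha]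
    linarith
  have hB : a / b ≤ Real.logb 2 ((a + b) / b) := by
    rw [Real.le_logb_iff_rpow_le one_lt_two (by positivity), add_div, div_self hb.ne', add_comm]
    simpa [one_add_one_eq_two] using rpow_one_add_le_one_add_mul_self (s := 1)
      (by norm_num) (div_nonneg ha.le hb.le) ((div_le_one hb).2 hab)
  have hsplit : (a + b) * Real.logb 2 (a + b) - a * Real.logb 2 a - b * Real.logb 2 b
      = a * Real.logb 2 ((a + b) / a) + b * Real.logb 2 ((a + b) / b) := by
    rw [Real.logb_div (by positivity) ha.ne', Real.logb_div (by positivity) hb.ne']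
    ring
  have : a = b * (a / b) := by field_simp
  nlinarith [mul_le_mul_of_nonneg_left hA ha.le, mul_le_mul_of_nonneg_left hB hb.le]

noncomputable def diamBoundReal (α a : ℝ) : ℝ :=
  if α = 1 then max (a * Real.logb 2 a / 2) 0 else a ^ α / (2 ^ α - 2)

theorem two_lt_two_rpow (hα : 1 < α) : (2 : ℝ) < 2 ^ α := by
  simpa using Real.rpow_lt_rpow_of_exponent_lt one_lt_two hα

theorem diamBoundReal_nonneg (hα : 1 ≤ α) {a : ℝ} (ha : 0 ≤ a) : 0 ≤ diamBoundReal α a := by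
  unfold diamBoundReal
  split_ifs with h
  · exact le_max_right _ _
  · have := two_lt_two_rpow (lt_of_le_of_ne hα (Ne.symm h))
    exact div_nonneg (Real.rpow_nonneg ha α) (by linarith)

theorem diamBoundReal_add_le (hα : 1 ≤ α) {a b : ℝ} (ha : 1 ≤ a) (hab : a ≤ b) :
    diamBoundReal α a + a ^ α + diamBoundReal α b ≤ diamBoundReal α (a + b) := by
  unfold diamBoundReal
  split_ifs with h
  · subst h
    have hlog : ∀ {c : ℝ}, 1 ≤ c → max (c * Real.logb 2 c / 2) 0 = c * Real.logb 2 c / 2 :=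
      fun hc => max_eq_left (by have := Real.logb_nonneg one_lt_two hc; positivity)
    rw [hlog ha, hlog (ha.trans hab), hlog (by linarith), Real.rpow_one]
    linarith [mul_logb_add_mul_logb_add_le (by linarith) hab]
  · have hK := two_lt_two_rpow (lt_of_le_of_ne hα (Ne.symm h))
    have hK' : (0 : ℝ) < 2 ^ α - 2 := by linarith
    calc a ^ α / (2 ^ α - 2) + a ^ α + b ^ α / (2 ^ α - 2)
        = ((2 ^ α - 1) * a ^ α + b ^ α) / (2 ^ α - 2) := by field_simp; ring
      _ ≤ (a + b) ^ α / (2 ^ α - 2) := by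
        gcongr
        exact two_rpow_sub_one_mul_rpow_add_rpow_le hα (by linarith) hab

theorem diamBound_eq_ofReal (hα : 1 ≤ α) {w : ℝ≥0∞} (hw : w ≠ ⊤) :
    diamBound α w = ENNReal.ofReal (diamBoundReal α w.toReal) := by
  unfold diamBound diamBoundReal
  split_ifs with h
  · rfl
  · have hK := two_lt_two_rpow (lt_of_le_of_ne hα (Ne.symm h))
    rw [ENNReal.ofReal_div_of_pos (by linarith), ENNReal.ofReal_sub _ zero_le_two,
      ← ENNReal.ofReal_rpow_of_nonneg ENNReal.toReal_nonneg (by linarith),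
      ← ENNReal.ofReal_rpow_of_nonneg zero_le_two (by linarith), ENNReal.ofReal_toReal hw]
    norm_num

theorem diamBound_top (hα : 0 < α) : diamBound α ⊤ = ⊤ := by
  unfold diamBound
  split_ifs with _ htop
  · rfl
  · exact absurd rfl htop
  · rw [ENNReal.top_rpow_of_pos hα]
    exact ENNReal.top_div_of_ne_top (ENNReal.sub_ne_top (by simp))

theorem diamBound_add_le (hα : 1 ≤ α) {w₁ w₂ : ℝ≥0∞} (h₁ : 1 ≤ w₁) (h₂ : 1 ≤ w₂)
    (hw₁ : w₁ ≠ ⊤) (hw₂ : w₂ ≠ ⊤) :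
    diamBound α w₁ + min w₁ w₂ ^ α + diamBound α w₂ ≤ diamBound α (w₁ + w₂) := by
  wlog h : w₁ ≤ w₂ generalizing w₁ w₂
  · calc diamBound α w₁ + min w₁ w₂ ^ α + diamBound α w₂
        = diamBound α w₂ + min w₂ w₁ ^ α + diamBound α w₁ := by rw [min_comm]; ring
      _ ≤ diamBound α (w₂ + w₁) := this h₂ h₁ hw₂ hw₁ (le_of_not_ge h)
      _ = diamBound α (w₁ + w₂) := by rw [add_comm]
  have one_le : ∀ {w : ℝ≥0∞}, 1 ≤ w → w ≠ ⊤ → 1 ≤ w.toReal := fun h hw => by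
    simpa using ENNReal.toReal_mono hw h
  have hpow : w₁ ^ α = ENNReal.ofReal (w₁.toReal ^ α) := by
    rw [← ENNReal.ofReal_rpow_of_nonneg ENNReal.toReal_nonneg (by linarith),
      ENNReal.ofReal_toReal hw₁]
  have hD₁ := diamBoundReal_nonneg hα (ENNReal.toReal_nonneg (a := w₁))
  rw [min_eq_left h, hpow, diamBound_eq_ofReal hα hw₁, diamBound_eq_ofReal hα hw₂,
    diamBound_eq_ofReal hα (ENNReal.add_ne_top.2 ⟨hw₁, hw₂⟩), ENNReal.toReal_add hw₁ hw₂,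
    ← ENNReal.ofReal_add hD₁ (Real.rpow_nonneg ENNReal.toReal_nonneg α),
    ← ENNReal.ofReal_add (by positivity) (diamBoundReal_nonneg hα ENNReal.toReal_nonneg)]
  exact ENNReal.ofReal_le_ofReal (diamBoundReal_add_le hα (one_le h₁ hw₁)
    (ENNReal.toReal_mono hw₂ h))

inductive Mergeable (G : SimpleGraph V) (r : V → ℝ≥0) (α : ℝ) : Set V → Prop
  | singleton (x : V) : Mergeable G r α {x}
  | union {A B : Set V} : Mergeable G r α A → Mergeable G r α B → Disjoint A B →
      setDist G A B ≤ min (wt r A) (wt r B) ^ α → Mergeable G r α (A ∪ B)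

namespace Mergeable

theorem nonempty (h : Mergeable G r α S) : S.Nonempty := by
  induction h with
  | singleton x => exact Set.singleton_nonempty x
  | union _ _ _ _ hA _ => exact hA.inl

theorem finite (h : Mergeable G r α S) : S.Finite := by
  induction h with
  | singleton x => exact Set.finite_singleton x
  | union _ _ _ _ hA hB => exact hA.union hB

theorem linkedWithin (hconn : G.Preconnected) (hα : 0 ≤ α) (h : Mergeable G r α S) :
    LinkedWithin G (ballSet G S (wt r S ^ α)) S := by
  induction h with
  | singleton x =>
    rintro _ rfl _ rfl
    refine ⟨.nil, fun z hz => ?_⟩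
    rw [SimpleGraph.Walk.support_nil, List.mem_singleton] at hz
    exact subset_ballSet _ hz
  | @union A B hA hB _ hAB ihA ihB =>
    have hR : ∀ {X}, X ⊆ A ∪ B → wt r X ^ α ≤ wt r (A ∪ B) ^ α :=
      fun hX => ENNReal.rpow_le_rpow (wt_mono hX) hα
    obtain ⟨a, ha, b, hb, hd⟩ := exists_dist_eq_setDist (G := G) hA.nonempty hB.nonempty
    obtain ⟨p, hp⟩ := exists_walk_support_subset_ballSet hconn ha <|
      calc (G.dist a b : ℝ≥0∞) ≤ min (wt r A) (wt r B) ^ α := hd ▸ hAB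
        _ ≤ wt r A ^ α := ENNReal.rpow_le_rpow (min_le_left _ _) hα
    exact (ihA.mono (ballSet_mono Set.subset_union_left (hR Set.subset_union_left))).union
      (ihB.mono (ballSet_mono Set.subset_union_right (hR Set.subset_union_right))) ha hb p
      fun z hz => ballSet_mono Set.subset_union_left (hR Set.subset_union_left) (hp z hz)

theorem dist_le_diamBound (hconn : G.Connected) (hα : 1 ≤ α)
    (h : Mergeable G r α S) : ∀ x ∈ S, ∀ y ∈ S, (G.dist x y : ℝ≥0∞) ≤ diamBound α (wt r S) := by
  induction h with
  | singleton x =>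
    rintro _ rfl _ rfl
    simp
  | @union A B hA hB hdisj hAB ihA ihB =>
    have h1 := one_le_min_wt hconn (by linarith) hdisj hAB
    obtain ⟨a, ha, b, hb, hd⟩ := exists_dist_eq_setDist (G := G) hA.nonempty hB.nonempty
    intro x hx y hy
    calc (G.dist x y : ℝ≥0∞)
        ≤ diamBound α (wt r A) + min (wt r A) (wt r B) ^ α + diamBound α (wt r B) :=
          dist_le_of_mem_union hconn ihA ihB ha hb (hd ▸ hAB) x hx y hy
      _ ≤ diamBound α (wt r (A ∪ B)) := by
          rw [wt_union hdisj]
          exact diamBound_add_le hα (h1.trans (min_le_left _ _)) (h1.trans (min_le_right _ _))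
            (wt_ne_top_of_finite hA.finite) (wt_ne_top_of_finite hB.finite)

end Mergeable

structure IsMergeablePartition (G : SimpleGraph V) (r : V → ℝ≥0) (α : ℝ) (C : Set V)
    (P : Finset (Set V)) : Prop where
  mergeable : ∀ A ∈ P, Mergeable G r α A
  pairwiseDisjoint : (P : Set (Set V)).PairwiseDisjoint id
  sUnion_eq : ⋃₀ (P : Set (Set V)) = C

namespace IsMergeablePartition

variable {P : Finset (Set V)}

theorem merge [DecidableEq (Set V)] (hP : IsMergeablePartition G r α C P) {A Q : Set V}
    (hA : A ∈ P) (hQ : Q ∈ P) (h : Mergeable G r α (A ∪ Q)) :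
    IsMergeablePartition G r α C (insert (A ∪ Q) (P \ {A, Q})) where
  mergeable X hX := by
    rcases Finset.mem_insert.1 hX with rfl | hX
    exacts [h, hP.mergeable X (Finset.mem_sdiff.1 hX).1]
  pairwiseDisjoint := by
    rw [Finset.coe_insert]
    refine (hP.pairwiseDisjoint.subset (by simp)).insert fun X hX _ => ?_
    obtain ⟨hXP, hXAQ⟩ := Finset.mem_sdiff.1 hX
    simp only [Finset.mem_insert, Finset.mem_singleton, not_or] at hXAQ
    exact Set.disjoint_union_left.2 ⟨hP.pairwiseDisjoint hA hXP (Ne.symm hXAQ.1),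
      hP.pairwiseDisjoint hQ hXP (Ne.symm hXAQ.2)⟩
  sUnion_eq := by
    rw [← hP.sUnion_eq]
    ext x
    simp only [Finset.coe_insert, Set.sUnion_insert, Set.mem_union, Set.mem_sUnion,
      Finset.mem_coe, Finset.mem_sdiff, Finset.mem_insert, Finset.mem_singleton]
    constructor
    · rintro ((hx | hx) | ⟨X, ⟨hX, -⟩, hx⟩)
      exacts [⟨A, hA, hx⟩, ⟨Q, hQ, hx⟩, ⟨X, hX, hx⟩]
    · rintro ⟨X, hX, hx⟩
      by_cases hXA : X = A
      · exact Or.inl (Or.inl (hXA ▸ hx))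
      by_cases hXQ : X = Q
      · exact Or.inl (Or.inr (hXQ ▸ hx))
      exact Or.inr ⟨X, ⟨hX, by tauto⟩, hx⟩

/-- The lightest piece `A` lies within `r(A)^α` of `C \ A`, hence of the piece containing a
closest point of `C \ A`. -/
theorem exists_mergeable_union (hα : 0 ≤ α) (hC : C ∈ (CMP G r α).classes)
    (hP : IsMergeablePartition G r α C P) (hcard : 1 < P.card) :
    ∃ A ∈ P, ∃ Q ∈ P, A ≠ Q ∧ Mergeable G r α (A ∪ Q) := by
  obtain ⟨A, hAP, hmin⟩ := Finset.exists_min_image P (wt r) (Finset.card_pos.1 (by omega))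
  obtain ⟨B, hBP, hBA⟩ := Finset.exists_mem_ne hcard A
  have hsub : ∀ X ∈ P, X ⊆ C := fun X hX => hP.sUnion_eq ▸ Set.subset_sUnion_of_mem hX
  have hA := (hP.mergeable A hAP).nonempty
  have hCA : (C \ A).Nonempty := (hP.mergeable B hBP).nonempty.mono fun x hx =>
    ⟨hsub B hBP hx, (hP.pairwiseDisjoint hBP hAP hBA).notMem_of_mem_left hx⟩
  obtain ⟨a, ha, q, ⟨hqC, hqA⟩, hd⟩ := exists_dist_eq_setDist (G := G) hA hCA
  rw [← hP.sUnion_eq] at hqC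
  obtain ⟨Q, hQP, hqQ⟩ := hqC
  have hAQ : A ≠ Q := fun h => hqA (h ▸ hqQ)
  refine ⟨A, hAP, Q, hQP, hAQ, .union (hP.mergeable A hAP) (hP.mergeable Q hQP)
    (hP.pairwiseDisjoint hAP hQP hAQ) ?_⟩
  calc setDist G A Q ≤ G.dist a q := setDist_le_dist ha hqQ
    _ = setDist G A (C \ A) := hd
    _ ≤ min (wt r A) (wt r (C \ A)) ^ α := setDist_diff_le hα hC hA (hsub A hAP) hCA
    _ ≤ wt r A ^ α := ENNReal.rpow_le_rpow (min_le_left _ _) hα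
    _ = min (wt r A) (wt r Q) ^ α := by rw [min_eq_left (hmin Q hQP)]

theorem mergeable_of_mem_classes (hα : 0 ≤ α) (hC : C ∈ (CMP G r α).classes)
    (hP : IsMergeablePartition G r α C P) : Mergeable G r α C := by
  classical
  induction h : P.card using Nat.strong_induction_on generalizing P with
  | _ n ih =>
    rcases lt_or_ge 1 P.card with hcard | hcard
    · obtain ⟨A, hA, Q, hQ, hAQ, hm⟩ := hP.exists_mergeable_union hα hC hcard
      refine ih _ ?_ (hP.merge hA hQ hm) rfl
      calc (insert (A ∪ Q) (P \ {A, Q})).card ≤ (P \ {A, Q}).card + 1 := Finset.card_insert_le _ _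
        _ < P.card := by
          rw [Finset.card_sdiff_of_subset (Finset.insert_subset hA (by simpa using hQ)),
            Finset.card_pair hAQ]
          omega
        _ = n := h
    · obtain ⟨c, hc⟩ := Setoid.nonempty_of_mem_partition (Setoid.isPartition_classes _) hC
      rw [← hP.sUnion_eq] at hc ⊢
      obtain ⟨A, hA, -⟩ := hc
      obtain rfl : P = {A} := Finset.eq_singleton_iff_unique_mem.2
        ⟨hA, fun X hX => Finset.card_le_one.1 hcard X hX A hA⟩
      simpa using hP.mergeable A hA

end IsMergeablePartition

theorem mergeable_of_mem_classes (hα : 0 ≤ α) (hC : C ∈ (CMP G r α).classes) (hfin : C.Finite) :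
    Mergeable G r α C := by
  classical
  refine IsMergeablePartition.mergeable_of_mem_classes (P := hfin.toFinset.image ({·})) hα hC
    ⟨by simpa using fun x _ => .singleton x, fun X hX Y hY hXY => ?_, by simp⟩
  simp only [Finset.coe_image, Set.Finite.coe_toFinset, Set.mem_image] at hX hY
  obtain ⟨x, -, rfl⟩ := hX
  obtain ⟨y, -, rfl⟩ := hY
  exact Set.disjoint_singleton.2 fun h => hXY (h ▸ rfl)

theorem CMP_cluster_ball_connected_and_diam_bound_general
    {V : Type*} (G : SimpleGraph V) (hconn : G.Connected)
    (r : V → ℝ≥0) (α : ℝ) (hα : 1 ≤ α) :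
    ∀ C ∈ (CMP G r α).classes,
      (G.induce (ballSet G C ((wt r C) ^ α))).Connected ∧
      (∀ x ∈ C, ∀ y ∈ C, (G.dist x y : ℝ≥0∞) ≤ diamBound α (wt r C)) := by
  intro C hC
  have hα₀ : 0 < α := by linarith
  by_cases hw : wt r C = ⊤
  · rw [hw, diamBound_top hα₀, ENNReal.top_rpow_of_pos hα₀]
    exact ⟨induce_ballSet_connected hconn.preconnected
      (Setoid.nonempty_of_mem_partition (Setoid.isPartition_classes _) hC)
      (linkedWithin_ballSet_top hconn.preconnected), fun _ _ _ _ => le_top⟩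
  · have hm := mergeable_of_mem_classes hα₀.le hC (finite_of_mem_classes hconn hα₀ hC hw)
    exact ⟨induce_ballSet_connected hconn.preconnected hm.nonempty
      (hm.linkedWithin hconn.preconnected hα₀.le), hm.dist_le_diamBound hconn hα⟩

/-- For every cluster `C` of the CMP: (i) the ball `B(C, r(C)^α)` induces a connected
subgraph of `G`; (ii) `diam(C) ≤ max(r(C)·log₂ r(C)/2, 0)` if `α = 1`, and
`diam(C) ≤ r(C)^α/(2^α − 2)` if `α > 1`. -/
theorem CMP_cluster_ball_connected_and_diam_bound
    {V : Type*} (G : SimpleGraph V) (hconn : G.Connected)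
    (hlf : ∀ v : V, (G.neighborSet v).Finite)
    (r : V → ℝ≥0) (α : ℝ) (hα : 1 ≤ α) :
    ∀ C ∈ (CMP G r α).classes,
      (G.induce (ballSet G C ((wt r C) ^ α))).Connected ∧
      (∀ x ∈ C, ∀ y ∈ C, (G.dist x y : ℝ≥0∞) ≤ diamBound α (wt r C)) :=
  CMP_cluster_ball_connected_and_diam_bound_general G hconn r α hα

end CMPPaper
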